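/- arXiv:1906.10228 — 6 statements merged into one kernel-verified Lean document; each statement's English description precedes it below -/
import Mathlib

section
/- Define V(s,β) = ∂/∂β log Z(s,β). Then for every nonterminal state s of a deterministic MDP, V satisfies the Bellman equation V(s,β) = Σ_a π(a|s)·[R(s,a) + V(s+a,β)], where π(a|s) = exp(β·R(s,a)+μ)·Z(s+a,β)/Z(s,β). -/
open Real Filter Topology

/-- A deterministic Markov decision process: a deterministic transition function,
transition rewards, terminal states and terminal rewards. -/
structure DetMDP (S A : Type) where
  step : S → A → S
  reward : S → A → ℝ
  terminal : S → Prop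
  termReward : S → ℝ

namespace DetMDP

variable {S A : Type}

/-- `M.isTraj s l` : the list of actions `l` is a trajectory starting at `s`,
i.e. it passes only through nonterminal states and ends at a terminal state. -/
def isTraj (M : DetMDP S A) : S → List A → Prop
  | s, [] => M.terminal s
  | s, a :: l => ¬ M.terminal s ∧ M.isTraj (M.step s a) l

/-- Cumulative reward of a trajectory, including the terminal reward. -/
def pathReward (M : DetMDP S A) : S → List A → ℝ
  | s, [] => M.termReward s
  | s, a :: l => M.reward s a + M.pathReward (M.step s a) l

/-- The ensemble `Ω(s)` of trajectories starting at `s`. -/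
def Traj (M : DetMDP S A) (s : S) : Set (List A) := {l | M.isTraj s l}

/-- Boltzmann weight `exp(β Σ_t r_t(ω) + μ |ω|)` of a trajectory. -/
noncomputable def wt (M : DetMDP S A) (β μ : ℝ) (s : S) (l : List A) : ℝ :=
  Real.exp (β * M.pathReward s l + μ * (l.length : ℝ))

/-- The partition function `Z(s, β) = Σ_{ω ∈ Ω(s)} exp(β Σ_t r_t(ω) + μ |ω|)`. -/
noncomputable def Z (M : DetMDP S A) (β μ : ℝ) (s : S) : ℝ :=
  ∑' ω : M.Traj s, M.wt β μ s ω.1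

end DetMDP

section Aux
variable {S A : Type} [Fintype A]

lemma Z_eq_sum (M : DetMDP S A) (hfin : ∀ s : S, (M.Traj s).Finite) (β μ : ℝ) (s : S) :
    M.Z β μ s = ∑ ω ∈ (hfin s).toFinset, M.wt β μ s ω := by
  haveI : Fintype (M.Traj s) := (hfin s).fintype
  rw [DetMDP.Z, tsum_fintype]
  exact (Finset.sum_subtype _ (fun x => (hfin s).mem_toFinset) _).symm

lemma traj_decomp (M : DetMDP S A) (hfin : ∀ s : S, (M.Traj s).Finite)
    (s : S) (hs : ¬ M.terminal s) (F : List A → ℝ) :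
    ∑ ω ∈ (hfin s).toFinset, F ω
      = ∑ a : A, ∑ ω ∈ (hfin (M.step s a)).toFinset, F (a :: ω) := by
  classical
  have hset : (hfin s).toFinset
      = Finset.univ.biUnion
          (fun a : A => ((hfin (M.step s a)).toFinset).image (a :: ·)) := by
    ext l
    cases l with
    | nil => simp [Set.Finite.mem_toFinset, DetMDP.Traj, DetMDP.isTraj, hs]
    | cons a l =>
      simp only [Set.Finite.mem_toFinset, DetMDP.Traj, Set.mem_setOf_eq, DetMDP.isTraj,
        Finset.mem_biUnion, Finset.mem_univ, Finset.mem_image, true_and]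
      constructor
      · rintro ⟨-, h⟩; exact ⟨a, l, h, rfl⟩
      · rintro ⟨a', l', h, heq⟩
        cases heq
        exact ⟨hs, h⟩
  rw [hset, Finset.sum_biUnion]
  · refine Finset.sum_congr rfl fun a _ => Finset.sum_image ?_
    intro x _ y _ h
    simpa using h
  · intro a _ b _ hab
    simp only [Finset.disjoint_left, Finset.mem_image]
    rintro x ⟨l1, -, rfl⟩ ⟨l2, -, heq⟩
    injection heq with h1 h2
    exact hab h1.symm

end Aux
set_option linter.unusedSectionVars false

section Main
variable {S A : Type} [Fintype A]

lemma wt_cons (M : DetMDP S A) (β μ : ℝ) (s : S) (a : A) (l : List A) :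
    M.wt β μ s (a :: l) = Real.exp (β * M.reward s a + μ) * M.wt β μ (M.step s a) l := by
  rw [DetMDP.wt, DetMDP.wt, ← Real.exp_add, DetMDP.pathReward]
  push_cast [List.length_cons]
  ring_nf

lemma Z_pos (M : DetMDP S A) (hfin : ∀ s : S, (M.Traj s).Finite)
    (hne : ∀ s : S, (M.Traj s).Nonempty) (β μ : ℝ) (s : S) : 0 < M.Z β μ s := by
  rw [Z_eq_sum M hfin]
  exact Finset.sum_pos (fun ω _ => Real.exp_pos _) ((hfin s).toFinset_nonempty.2 (hne s))

noncomputable def Zd (M : DetMDP S A) (hfin : ∀ s : S, (M.Traj s).Finite)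
    (β μ : ℝ) (s : S) : ℝ :=
  ∑ ω ∈ (hfin s).toFinset, M.pathReward s ω * M.wt β μ s ω

lemma hasDerivAt_Z (M : DetMDP S A) (hfin : ∀ s : S, (M.Traj s).Finite)
    (β μ : ℝ) (s : S) :
    HasDerivAt (fun b => M.Z b μ s) (Zd M hfin β μ s) β := by
  have h : HasDerivAt (fun b => ∑ ω ∈ (hfin s).toFinset, M.wt b μ s ω)
      (Zd M hfin β μ s) β := by
    refine HasDerivAt.fun_sum fun ω _ => ?_
    have h1 : HasDerivAt (fun b => b * M.pathReward s ω + μ * (ω.length : ℝ))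
        (M.pathReward s ω) β := by
      simpa using ((hasDerivAt_id β).mul_const (M.pathReward s ω)).add_const
        (μ * (ω.length : ℝ))
    simpa [DetMDP.wt, mul_comm] using h1.exp
  exact h.congr_of_eventuallyEq (Filter.Eventually.of_forall fun b => Z_eq_sum M hfin b μ s)

lemma deriv_logZ (M : DetMDP S A) (hfin : ∀ s : S, (M.Traj s).Finite)
    (hne : ∀ s : S, (M.Traj s).Nonempty) (β μ : ℝ) (s : S) :
    deriv (fun b => Real.log (M.Z b μ s)) β = Zd M hfin β μ s / M.Z β μ s :=
  ((hasDerivAt_Z M hfin β μ s).log (Z_pos M hfin hne β μ s).ne').deriv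

lemma Z_rec (M : DetMDP S A) (hfin : ∀ s : S, (M.Traj s).Finite)
    (β μ : ℝ) (s : S) (hs : ¬ M.terminal s) :
    M.Z β μ s = ∑ a : A, Real.exp (β * M.reward s a + μ) * M.Z β μ (M.step s a) := by
  rw [Z_eq_sum M hfin, traj_decomp M hfin s hs]
  refine Finset.sum_congr rfl fun a _ => ?_
  rw [Z_eq_sum M hfin, Finset.mul_sum]
  exact Finset.sum_congr rfl fun ω _ => wt_cons M β μ s a ω

lemma Zd_rec (M : DetMDP S A) (hfin : ∀ s : S, (M.Traj s).Finite)
    (β μ : ℝ) (s : S) (hs : ¬ M.terminal s) :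
    Zd M hfin β μ s = ∑ a : A, Real.exp (β * M.reward s a + μ) *
      (M.reward s a * M.Z β μ (M.step s a) + Zd M hfin β μ (M.step s a)) := by
  rw [Zd, traj_decomp M hfin s hs]
  refine Finset.sum_congr rfl fun a _ => ?_
  rw [Z_eq_sum M hfin, Zd, Finset.mul_sum, mul_add, Finset.mul_sum, Finset.mul_sum,
    ← Finset.sum_add_distrib]
  refine Finset.sum_congr rfl fun ω _ => ?_
  rw [wt_cons M β μ s a ω]
  show (M.reward s a + M.pathReward (M.step s a) ω) * _ = _
  ring

end Main


/-- With `V(s,β) := ∂/∂β log Z(s,β)`, for every nonterminal state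
`s` of a deterministic MDP (with finitely many, and at least one, trajectories from
each state) we have the Bellman equation
`V(s,β) = Σ_a π(a|s) (R(s,a) + V(s+a,β))` with
`π(a|s) = exp(β R(s,a) + μ) Z(s+a,β) / Z(s,β)`. -/
theorem valueFunction_bellman {S A : Type} [Fintype A]
    (M : DetMDP S A)
    (hfin : ∀ s : S, (M.Traj s).Finite) (hne : ∀ s : S, (M.Traj s).Nonempty)
    (β μ : ℝ) (s : S) (hs : ¬ M.terminal s) :
    deriv (fun b => Real.log (M.Z b μ s)) β =
      ∑ a : A, (Real.exp (β * M.reward s a + μ) * M.Z β μ (M.step s a) / M.Z β μ s) *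
        (M.reward s a + deriv (fun b => Real.log (M.Z b μ (M.step s a))) β) := by
  rw [deriv_logZ M hfin hne, Zd_rec M hfin β μ s hs, Finset.sum_div]
  refine Finset.sum_congr rfl fun a _ => ?_
  rw [deriv_logZ M hfin hne]
  have h1 : 0 < M.Z β μ (M.step s a) := Z_pos M hfin hne β μ (M.step s a)
  have h2 : 0 < M.Z β μ s := Z_pos M hfin hne β μ s
  field_simp
end

section
/- Let Ω_max(s) ⊆ Ω(s) be the set of trajectories achieving the maximal cumulative reward V*(s), and N_max(s) = Σ_{ω∈Ω_max(s)} e^{μ|ω|}. Then Z(s,β)·e^{-β·V*(s)} → N_max(s) as β → ∞; moreover |Z(s,β)e^{-βV*(s)} - N_max(s)| ≤ e^{-βΔ}·Σ_{ω∈Ω(s)} e^{μ|ω|}, where Δ > 0 is the gap between the maximal cumulative reward and the second largest value. -/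
open Real Filter Topology

open scoped Classical

/-- Let `Ω_max(s)` be the set of trajectories achieving the
maximal cumulative reward `V*(s)` and `N_max(s) = Σ_{ω ∈ Ω_max(s)} e^{μ|ω|}`.
Then `Z(s,β) e^{-β V*(s)} → N_max(s)` as `β → ∞`, and moreover for `β ≥ 0`,
`|Z(s,β) e^{-β V*(s)} - N_max(s)| ≤ e^{-βΔ} Σ_{ω ∈ Ω(s)} e^{μ|ω|}` where `Δ > 0`
is a gap between the maximal cumulative reward and all non-maximal values. -/
theorem Z_asymptotics {S A : Type}
    (M : DetMDP S A) (s : S) (μ : ℝ)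
    (T : Finset (List A)) (hT : ∀ l, l ∈ T ↔ M.isTraj s l) (hne : T.Nonempty)
    (Δ : ℝ) (hΔ : 0 < Δ)
    (hgap : ∀ ω ∈ T, M.pathReward s ω ≠ T.sup' hne (M.pathReward s) →
      M.pathReward s ω ≤ T.sup' hne (M.pathReward s) - Δ) :
    Tendsto (fun β : ℝ =>
        (∑ ω ∈ T, Real.exp (β * M.pathReward s ω + μ * (ω.length : ℝ))) *
          Real.exp (-(β * T.sup' hne (M.pathReward s))))
      atTop (𝓝 (∑ ω ∈ T.filter (fun ω => M.pathReward s ω = T.sup' hne (M.pathReward s)),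
        Real.exp (μ * (ω.length : ℝ)))) ∧
    ∀ β : ℝ, 0 ≤ β →
      |(∑ ω ∈ T, Real.exp (β * M.pathReward s ω + μ * (ω.length : ℝ))) *
          Real.exp (-(β * T.sup' hne (M.pathReward s))) -
        ∑ ω ∈ T.filter (fun ω => M.pathReward s ω = T.sup' hne (M.pathReward s)),
          Real.exp (μ * (ω.length : ℝ))| ≤
        Real.exp (-(β * Δ)) * ∑ ω ∈ T, Real.exp (μ * (ω.length : ℝ)) := by

  set V := T.sup' hne (M.pathReward s) with hV
  set N := ∑ ω ∈ T.filter (fun ω => M.pathReward s ω = V), Real.exp (μ * (ω.length : ℝ)) with hN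
  set f := fun β : ℝ => (∑ ω ∈ T, Real.exp (β * M.pathReward s ω + μ * (ω.length : ℝ))) *
      Real.exp (-(β * V)) with hf
  have key : ∀ β : ℝ, f β - N = ∑ ω ∈ T.filter (fun ω => ¬ M.pathReward s ω = V),
      Real.exp (β * (M.pathReward s ω - V) + μ * (ω.length : ℝ)) := by
    intro β
    have h1 : f β = ∑ ω ∈ T, Real.exp (β * (M.pathReward s ω - V) + μ * (ω.length : ℝ)) := by
      rw [hf]; simp only []
      rw [Finset.sum_mul]
      refine Finset.sum_congr rfl fun ω _ => ?_
      rw [← Real.exp_add]; ring_nf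
    rw [h1, ← Finset.sum_filter_add_sum_filter_not T (fun ω => M.pathReward s ω = V)]
    have h2 : ∑ ω ∈ T.filter (fun ω => M.pathReward s ω = V),
        Real.exp (β * (M.pathReward s ω - V) + μ * (ω.length : ℝ)) = N := by
      refine Finset.sum_congr rfl fun ω hω => ?_
      rw [Finset.mem_filter] at hω
      rw [hω.2]; ring_nf
    rw [h2]; ring
  have hbound : ∀ β : ℝ, 0 ≤ β → |f β - N| ≤
      Real.exp (-(β * Δ)) * ∑ ω ∈ T, Real.exp (μ * (ω.length : ℝ)) := by
    intro β hβ
    rw [key β, abs_of_nonneg (Finset.sum_nonneg fun ω _ => (Real.exp_pos _).le), Finset.mul_sum]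
    calc ∑ ω ∈ T.filter (fun ω => ¬ M.pathReward s ω = V),
          Real.exp (β * (M.pathReward s ω - V) + μ * (ω.length : ℝ))
        ≤ ∑ ω ∈ T.filter (fun ω => ¬ M.pathReward s ω = V),
          Real.exp (-(β * Δ)) * Real.exp (μ * (ω.length : ℝ)) := by
          refine Finset.sum_le_sum fun ω hω => ?_
          rw [Finset.mem_filter] at hω
          have hr := hgap ω hω.1 hω.2
          rw [← Real.exp_add]
          refine Real.exp_le_exp.2 (add_le_add ?_ le_rfl)
          have : M.pathReward s ω - V ≤ -Δ := by linarith
          calc β * (M.pathReward s ω - V) ≤ β * (-Δ) :=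
                mul_le_mul_of_nonneg_left this hβ
            _ = -(β * Δ) := by ring
      _ ≤ ∑ ω ∈ T, Real.exp (-(β * Δ)) * Real.exp (μ * (ω.length : ℝ)) :=
          Finset.sum_le_sum_of_subset_of_nonneg (Finset.filter_subset _ _)
            (fun ω _ _ => le_of_lt (by positivity))
  refine ⟨?_, hbound⟩
  have h0 : Tendsto (fun β : ℝ => Real.exp (-(β * Δ)) * ∑ ω ∈ T, Real.exp (μ * (ω.length : ℝ)))
      atTop (𝓝 0) := by
    rw [show (0:ℝ) = 0 * ∑ ω ∈ T, Real.exp (μ * (ω.length : ℝ)) by ring]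
    refine Tendsto.mul_const _ ?_
    refine Real.tendsto_exp_atBot.comp ?_
    have : Tendsto (fun β : ℝ => β * Δ) atTop atTop := Tendsto.atTop_mul_const hΔ tendsto_id
    simpa using tendsto_neg_atBot_iff.mpr this
  have hdiff : Tendsto (fun β : ℝ => f β - N) atTop (𝓝 0) := by
    refine squeeze_zero_norm' ?_ h0
    filter_upwards [eventually_ge_atTop (0:ℝ)] with β hβ
    exact hbound β hβ
  have := hdiff.add_const N
  simpa using this
end

section
/- In the β → ∞ limit, the policy π_β(a|s) ∝ exp(β·R(s,a)+μ)·Z(s+a,β) satisfies π_β(a|s) / [N_max(s+a)·exp(β(R(s,a)+V*(s+a)))] → c(s) for a normalization constant c(s) independent of a; consequently actions not attaining max_a (R(s,a)+V*(s+a)) receive probability tending to 0. -/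
open Real Filter Topology

/-- Consider a state `s` of a finite deterministic MDP; for each
action `a` let `R a` be the transition reward, `Z a β` the partition function of
the successor state `s+a`, `Vst a = V*(s+a)` its optimal cumulative reward and
`Nmax a = N_max(s+a) > 0` the weighted count of optimal trajectories, so that
`Z a β e^{-β Vst a} → Nmax a` as `β → ∞`.  Then the policy
`π_β(a|s) ∝ exp(β R(s,a) + μ) Z(s+a,β)` satisfies
`π_β(a|s) / (c(β) · Nmax(s+a) exp(β (R(s,a) + V*(s+a)))) → 1` for a normalization
factor `c` independent of `a`; consequently any action not attaining
`max_a (R(s,a) + V*(s+a))` receives probability tending to `0`. -/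
theorem asymptotic_policy {A : Type} [Fintype A] [Nonempty A]
    (R Vst Nmax : A → ℝ) (Z : A → ℝ → ℝ) (μ : ℝ)
    (hZpos : ∀ a β, 0 < Z a β)
    (hNpos : ∀ a, 0 < Nmax a)
    (hasym : ∀ a, Tendsto (fun β : ℝ => Z a β * Real.exp (-(β * Vst a)))
      atTop (𝓝 (Nmax a))) :
    (∃ c : ℝ → ℝ, ∀ a : A,
      Tendsto (fun β : ℝ =>
          (Real.exp (β * R a + μ) * Z a β / ∑ a' : A, Real.exp (β * R a' + μ) * Z a' β) /
            (c β * (Nmax a * Real.exp (β * (R a + Vst a)))))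
        atTop (𝓝 1)) ∧
    ∀ a : A, R a + Vst a < Finset.univ.sup' Finset.univ_nonempty (fun a' => R a' + Vst a') →
      Tendsto (fun β : ℝ =>
          Real.exp (β * R a + μ) * Z a β / ∑ a' : A, Real.exp (β * R a' + μ) * Z a' β)
        atTop (𝓝 0) := by
  have hSpos : ∀ β : ℝ, 0 < ∑ a' : A, Real.exp (β * R a' + μ) * Z a' β := fun β =>
    Finset.sum_pos (fun a _ => mul_pos (Real.exp_pos _) (hZpos a β)) Finset.univ_nonempty
  constructor
  · refine ⟨fun β => Real.exp μ / ∑ a' : A, Real.exp (β * R a' + μ) * Z a' β, fun a => ?_⟩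
    have key : ∀ β : ℝ,
        (Real.exp (β * R a + μ) * Z a β / ∑ a' : A, Real.exp (β * R a' + μ) * Z a' β) /
          ((Real.exp μ / ∑ a' : A, Real.exp (β * R a' + μ) * Z a' β) *
            (Nmax a * Real.exp (β * (R a + Vst a)))) =
        Z a β * Real.exp (-(β * Vst a)) / Nmax a := by
      intro β
      have h1 : Real.exp (β * R a + μ) = Real.exp (β * R a) * Real.exp μ := Real.exp_add _ _
      have h2 : Real.exp (β * (R a + Vst a)) = Real.exp (β * R a) * Real.exp (β * Vst a) := by
        rw [mul_add, Real.exp_add]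
      have h3 : Real.exp (-(β * Vst a)) = (Real.exp (β * Vst a))⁻¹ := Real.exp_neg _
      rw [h1, h2, h3]
      have hS : (∑ a' : A, Real.exp (β * R a' + μ) * Z a' β) ≠ 0 := (hSpos β).ne'
      have hN : Nmax a ≠ 0 := (hNpos a).ne'
      field_simp
    have := (hasym a).div_const (Nmax a)
    rw [div_self (hNpos a).ne'] at this
    exact this.congr fun β => (key β).symm
  · intro a ha
    obtain ⟨b, -, hb⟩ := Finset.exists_mem_eq_sup' (Finset.univ_nonempty (α := A))
      (fun a' => R a' + Vst a')
    rw [hb] at ha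
    have hd : R a + Vst a - (R b + Vst b) < 0 := by linarith
    -- upper bound function
    set g : ℝ → ℝ := fun β =>
      (Z a β * Real.exp (-(β * Vst a))) / (Z b β * Real.exp (-(β * Vst b))) *
        Real.exp (β * (R a + Vst a - (R b + Vst b))) with hg
    have hgt : Tendsto g atTop (𝓝 0) := by
      have h1 : Tendsto (fun β : ℝ =>
          (Z a β * Real.exp (-(β * Vst a))) / (Z b β * Real.exp (-(β * Vst b))))
          atTop (𝓝 (Nmax a / Nmax b)) := (hasym a).div (hasym b) (hNpos b).ne'
      have h2 : Tendsto (fun β : ℝ => Real.exp (β * (R a + Vst a - (R b + Vst b))))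
          atTop (𝓝 0) := by
        refine Real.tendsto_exp_atBot.comp ?_
        exact Tendsto.atTop_mul_const_of_neg hd tendsto_id
      simpa using h1.mul h2
    refine tendsto_of_tendsto_of_tendsto_of_le_of_le tendsto_const_nhds hgt
      (fun β => ?_) (fun β => ?_)
    · exact div_nonneg (mul_pos (Real.exp_pos _) (hZpos a β)).le (hSpos β).le
    · have hle : Real.exp (β * R b + μ) * Z b β ≤ ∑ a' : A, Real.exp (β * R a' + μ) * Z a' β :=
        Finset.single_le_sum (f := fun a' => Real.exp (β * R a' + μ) * Z a' β)
          (fun a' _ => le_of_lt (mul_pos (Real.exp_pos _) (hZpos a' β)))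
          (Finset.mem_univ b)
      have hstep : Real.exp (β * R a + μ) * Z a β / ∑ a' : A, Real.exp (β * R a' + μ) * Z a' β ≤
          Real.exp (β * R a + μ) * Z a β / (Real.exp (β * R b + μ) * Z b β) := by
        exact div_le_div_of_nonneg_left (mul_pos (Real.exp_pos _) (hZpos a β)).le
          (mul_pos (Real.exp_pos _) (hZpos b β)) hle
      refine hstep.trans (le_of_eq ?_)
      simp only [hg]
      have h6 : Real.exp (-(β * Vst a)) * Real.exp (β * (R a + Vst a - (R b + Vst b))) *
          Real.exp (β * R b + μ) = Real.exp (β * R a + μ) * Real.exp (-(β * Vst b)) := by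
        rw [← Real.exp_add, ← Real.exp_add, ← Real.exp_add]
        congr 1
        ring
      rw [div_mul_eq_mul_div, div_eq_div_iff (mul_pos (Real.exp_pos _) (hZpos b β)).ne'
        (mul_pos (hZpos b β) (Real.exp_pos _)).ne']
      linear_combination -(Z a β * Z b β) * h6
end

section
/- For the stochastic-MDP partition function Z(s,β) = Σ_{ω∈Ω(s)} exp(-βE(ω)+μ|ω|+L(ω)) (assumed a finite sum), the value function V(s,β) = ∂/∂β log Z(s,β) satisfies V(s,β) = Σ_{a,s'} [exp(βR(s,a,s')+μ)Z(s',β)/Z(s,β)]·P(s'|s,a)·[R(s,a,s') + V(s',β)]. -/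
open Real Filter Topology

/-- A stochastic Markov decision process with transition probabilities
`P(s'|s,a)` and deterministic rewards `R(s,a,s')`. -/
structure StochMDP (S A : Type) where
  P : S → A → S → ℝ
  reward : S → A → S → ℝ
  terminal : S → Prop
  termReward : S → ℝ

namespace StochMDP

variable {S A : Type}

/-- A trajectory is a list of (action, next state) pairs passing only through
nonterminal states and ending at a terminal state. -/
def isTraj (M : StochMDP S A) : S → List (A × S) → Prop
  | s, [] => M.terminal s
  | s, (_, s') :: l => ¬ M.terminal s ∧ M.isTraj s' l

/-- Cumulative reward of a trajectory, including the terminal reward. -/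
def pathReward (M : StochMDP S A) : S → List (A × S) → ℝ
  | s, [] => M.termReward s
  | s, (a, s') :: l => M.reward s a s' + M.pathReward s' l

/-- The likelihood `exp L(ω) = Π_t P(s_{t+1}|s_t,a_t)` of a trajectory. -/
def pathLik (M : StochMDP S A) : S → List (A × S) → ℝ
  | _, [] => 1
  | s, (a, s') :: l => M.P s a s' * M.pathLik s' l

/-- The ensemble `Ω(s)` of (positive-probability) trajectories starting at `s`. -/
def Traj (M : StochMDP S A) (s : S) : Set (List (A × S)) :=
  {l | M.isTraj s l ∧ 0 < M.pathLik s l}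

/-- The weight `exp(-β E(ω) + μ|ω| + L(ω))` of a trajectory, where
`E(ω) = -Σ_t r_t(ω)` and `L(ω)` is the log-likelihood. -/
noncomputable def wt (M : StochMDP S A) (β μ : ℝ) (s : S) (l : List (A × S)) : ℝ :=
  Real.exp (β * M.pathReward s l + μ * (l.length : ℝ) + Real.log (M.pathLik s l))

/-- The partition function `Z(s,β) = Σ_{ω ∈ Ω(s)} exp(-β E(ω) + μ|ω| + L(ω))`. -/
noncomputable def Z (M : StochMDP S A) (β μ : ℝ) (s : S) : ℝ :=
  ∑' ω : M.Traj s, M.wt β μ s ω.1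

end StochMDP

/-- For the stochastic-MDP partition function (a finite sum,
positive, and satisfying the averaged Bellman equation), the value function
`V(s,β) = ∂/∂β log Z(s,β)` satisfies
`V(s,β) = Σ_{a,s'} [exp(β R(s,a,s')+μ) Z(s',β)/Z(s,β)] P(s'|s,a) (R(s,a,s') + V(s',β))`. -/
theorem stochastic_valueFunction_bellman {S A : Type} [Fintype S] [Fintype A]
    (M : StochMDP S A)
    (hfin : ∀ s : S, (M.Traj s).Finite)
    (μ : ℝ)
    (hZpos : ∀ (b : ℝ) (s : S), 0 < M.Z b μ s)
    (hBellman : ∀ (b : ℝ) (s : S), ¬ M.terminal s →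
      M.Z b μ s = ∑ a : A, ∑ s' : S,
        M.P s a s' * (Real.exp (b * M.reward s a s' + μ) * M.Z b μ s'))
    (β : ℝ) (s : S) (hs : ¬ M.terminal s) :
    deriv (fun b => Real.log (M.Z b μ s)) β =
      ∑ a : A, ∑ s' : S,
        (Real.exp (β * M.reward s a s' + μ) * M.Z β μ s' / M.Z β μ s) * M.P s a s' *
          (M.reward s a s' + deriv (fun b => Real.log (M.Z b μ s')) β) := by
  classical
  -- finite-sum representation of Z
  have hZsum : ∀ (b : ℝ) (t : S),
      M.Z b μ t = ∑ ω ∈ (hfin t).toFinset, M.wt b μ t ω := by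
    intro b t
    haveI := (hfin t).fintype
    rw [StochMDP.Z, tsum_fintype, Finset.sum_set_coe, (hfin t).toFinset_eq_toFinset]
  -- derivative of Z
  set D : ℝ → S → ℝ := fun b t =>
    ∑ ω ∈ (hfin t).toFinset, M.pathReward t ω * M.wt b μ t ω with hDdef
  have hD : ∀ (b : ℝ) (t : S), HasDerivAt (fun x => M.Z x μ t) (D b t) b := by
    intro b t
    have : (fun x => M.Z x μ t) = fun x => ∑ ω ∈ (hfin t).toFinset, M.wt x μ t ω :=
      funext fun x => hZsum x t
    rw [this]
    apply HasDerivAt.fun_sum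
    intro ω hω
    have h1 : HasDerivAt (fun x : ℝ =>
        x * M.pathReward t ω + μ * (ω.length : ℝ) + Real.log (M.pathLik t ω))
        (M.pathReward t ω) b := by
      have := (((hasDerivAt_id b).mul_const (M.pathReward t ω)).add_const
        (μ * (ω.length : ℝ) + Real.log (M.pathLik t ω))).congr_deriv
        (by ring : (1 : ℝ) * M.pathReward t ω = M.pathReward t ω)
      simpa [add_assoc] using this
    simpa [StochMDP.wt, mul_comm] using h1.exp
  -- deriv log Z = D / Z
  have hlog : ∀ t : S, deriv (fun b => Real.log (M.Z b μ t)) β = D β t / M.Z β μ t := by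
    intro t
    exact ((hD β t).log (ne_of_gt (hZpos β t))).deriv
  -- differentiate the Bellman equation
  have hDs : D β s = ∑ a : A, ∑ s' : S, M.P s a s' *
      (M.reward s a s' * Real.exp (β * M.reward s a s' + μ) * M.Z β μ s'
        + Real.exp (β * M.reward s a s' + μ) * D β s') := by
    have hrhs : HasDerivAt (fun b => ∑ a : A, ∑ s' : S,
        M.P s a s' * (Real.exp (b * M.reward s a s' + μ) * M.Z b μ s'))
        (∑ a : A, ∑ s' : S, M.P s a s' *
          (M.reward s a s' * Real.exp (β * M.reward s a s' + μ) * M.Z β μ s'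
            + Real.exp (β * M.reward s a s' + μ) * D β s')) β := by
      apply HasDerivAt.fun_sum; intro a _
      apply HasDerivAt.fun_sum; intro s' _
      have he : HasDerivAt (fun b : ℝ => Real.exp (b * M.reward s a s' + μ))
          (M.reward s a s' * Real.exp (β * M.reward s a s' + μ)) β := by
        have h1 : HasDerivAt (fun b : ℝ => b * M.reward s a s' + μ)
            (M.reward s a s') β := by
          simpa using ((hasDerivAt_id β).mul_const (M.reward s a s')).add_const μ
        simpa [mul_comm] using h1.exp
      exact ((he.mul (hD β s')).const_mul (M.P s a s')).congr_deriv (by ring)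
    have heq : (fun b => M.Z b μ s) = fun b => ∑ a : A, ∑ s' : S,
        M.P s a s' * (Real.exp (b * M.reward s a s' + μ) * M.Z b μ s') :=
      funext fun b => hBellman b s hs
    have h2 : HasDerivAt (fun b => M.Z b μ s)
        (∑ a : A, ∑ s' : S, M.P s a s' *
          (M.reward s a s' * Real.exp (β * M.reward s a s' + μ) * M.Z β μ s'
            + Real.exp (β * M.reward s a s' + μ) * D β s')) β := by
      rw [heq]; exact hrhs
    exact (hD β s).unique h2
  -- finish with algebra
  rw [hlog s, hDs]
  rw [Finset.sum_div]
  apply Finset.sum_congr rfl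
  intro a _
  rw [Finset.sum_div]
  apply Finset.sum_congr rfl
  intro s' _
  rw [hlog s']
  have hz : M.Z β μ s ≠ 0 := ne_of_gt (hZpos β s)
  have hz' : M.Z β μ s' ≠ 0 := ne_of_gt (hZpos β s')
  field_simp
end

section
/- Define Q(s,a,β) = ∂/∂β log Z(s,a,β) for a deterministic MDP with finitely many trajectories. Then Q satisfies the expected-SARSA Bellman equation Q(s,a,β) = R(s,a) + Σ_{a'} π(a'|s+a)·Q(s+a,a',β), where π(a|s) = Z(s,a,β)/Σ_{a'} Z(s,a',β). -/
open Real Filter Topology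

namespace DetMDP

variable {S A : Type}

/-- The ensemble `Ω(s,a)` of trajectories starting at `s` with first action `a`. -/
def TrajSA (M : DetMDP S A) (s : S) (a : A) : Set (List A) :=
  {l | M.isTraj s l ∧ l.head? = some a}

/-- The state-action partition function
`Z(s,a,β) = Σ_{ω ∈ Ω(s,a)} exp(β Σ_t r_t(ω) + μ|ω|)`. -/
noncomputable def ZSA (M : DetMDP S A) (β μ : ℝ) (s : S) (a : A) : ℝ :=
  ∑' ω : M.TrajSA s a, M.wt β μ s ω.1


end DetMDP

namespace DetMDPAux

open DetMDP Classical

variable {S A : Type}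

lemma ZSA_eq_sum (M : DetMDP S A) {s : S} {a : A} (hf : (M.TrajSA s a).Finite)
    (β μ : ℝ) : M.ZSA β μ s a = ∑ l ∈ hf.toFinset, M.wt β μ s l := by
  haveI := hf.fintype
  rw [DetMDP.ZSA, tsum_fintype, hf.toFinset_eq_toFinset]
  exact Finset.sum_set_coe (M.TrajSA s a)

lemma ZSA_pos (M : DetMDP S A) {s : S} {a : A} (hf : (M.TrajSA s a).Finite)
    (hne : (M.TrajSA s a).Nonempty) (β μ : ℝ) : 0 < M.ZSA β μ s a := by
  rw [ZSA_eq_sum M hf]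
  apply Finset.sum_pos (fun l _ => Real.exp_pos _)
  obtain ⟨l, hl⟩ := hne
  exact ⟨l, hf.mem_toFinset.mpr hl⟩

lemma hasDerivAt_ZSA (M : DetMDP S A) {s : S} {a : A} (hf : (M.TrajSA s a).Finite)
    (β μ : ℝ) :
    HasDerivAt (fun b => M.ZSA b μ s a)
      (∑ l ∈ hf.toFinset, M.pathReward s l * M.wt β μ s l) β := by
  have : ∀ b : ℝ, M.ZSA b μ s a = ∑ l ∈ hf.toFinset, M.wt b μ s l :=
    fun b => ZSA_eq_sum M hf b μ
  rw [show (fun b => M.ZSA b μ s a) = fun b => ∑ l ∈ hf.toFinset, M.wt b μ s l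
      from funext this]
  apply HasDerivAt.fun_sum
  intro l _
  have h1 : HasDerivAt (fun b : ℝ => b * M.pathReward s l + μ * (l.length : ℝ))
      (M.pathReward s l) β := by
    simpa using ((hasDerivAt_id β).mul_const (M.pathReward s l)).add_const
      (μ * (l.length : ℝ))
  simpa [DetMDP.wt, mul_comm] using h1.exp

/-- Structural decomposition of the trajectory set. -/
lemma trajSA_decomp (M : DetMDP S A) [Fintype A] {s : S} {a : A}
    (hs : ¬ M.terminal s) (hsa : ¬ M.terminal (M.step s a)) (l : List A) :
    l ∈ M.TrajSA s a ↔ ∃ a' : A, ∃ m ∈ M.TrajSA (M.step s a) a', l = a :: m := by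
  constructor
  · rintro ⟨ht, hh⟩
    cases l with
    | nil => simp at hh
    | cons b m =>
      simp only [List.head?] at hh
      obtain rfl : b = a := by injection hh
      obtain ⟨-, hm⟩ := ht
      cases m with
      | nil => exact absurd hm hsa
      | cons a' m' => exact ⟨a', a' :: m', ⟨hm, rfl⟩, rfl⟩
  · rintro ⟨a', m, ⟨hm, -⟩, rfl⟩
    exact ⟨⟨hs, hm⟩, rfl⟩

lemma ZSA_rec (M : DetMDP S A) [Fintype A] {s : S} {a : A}
    (hfin : ∀ (s : S) (a : A), (M.TrajSA s a).Finite)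
    (hs : ¬ M.terminal s) (hsa : ¬ M.terminal (M.step s a)) (β μ : ℝ) :
    M.ZSA β μ s a =
      Real.exp (β * M.reward s a + μ) * ∑ a' : A, M.ZSA β μ (M.step s a) a' := by
  set s' := M.step s a with hs'
  have hset : (hfin s a).toFinset =
      Finset.univ.biUnion (fun a' : A => ((hfin s' a').toFinset).image (List.cons a)) := by
    ext l
    simp only [Set.Finite.mem_toFinset, Finset.mem_biUnion, Finset.mem_image,
      Finset.mem_univ, true_and]
    rw [trajSA_decomp M hs hsa]
    constructor
    · rintro ⟨a', m, hm, rfl⟩; exact ⟨a', m, hm, rfl⟩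
    · rintro ⟨a', m, hm, rfl⟩; exact ⟨a', m, hm, rfl⟩
  have hdisj : ∀ x ∈ (Finset.univ : Finset A), ∀ y ∈ (Finset.univ : Finset A), x ≠ y →
      Disjoint (((hfin s' x).toFinset).image (List.cons a))
        (((hfin s' y).toFinset).image (List.cons a)) := by
    intro x _ y _ hxy
    rw [Finset.disjoint_left]
    rintro l hx hy
    simp only [Finset.mem_image, Set.Finite.mem_toFinset] at hx hy
    obtain ⟨m1, hm1, rfl⟩ := hx
    obtain ⟨m2, hm2, heq⟩ := hy
    obtain rfl : m2 = m1 := by injection heq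
    exact hxy (by rw [← Option.some_inj, ← hm1.2, ← hm2.2])
  have hwt : ∀ m : List A, M.wt β μ s (a :: m) =
      Real.exp (β * M.reward s a + μ) * M.wt β μ s' m := by
    intro m
    rw [DetMDP.wt, DetMDP.wt, ← Real.exp_add]
    congr 1
    show β * M.pathReward s (a :: m) + μ * ((a :: m).length : ℝ) = _
    rw [DetMDP.pathReward]
    push_cast [List.length_cons]
    ring
  rw [ZSA_eq_sum M (hfin s a), hset, Finset.sum_biUnion hdisj, Finset.mul_sum]
  apply Finset.sum_congr rfl
  intro a' _
  rw [Finset.sum_image (by intro x _ y _ h; injection h),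
    ZSA_eq_sum M (hfin s' a'), Finset.mul_sum]
  exact Finset.sum_congr rfl (fun m _ => hwt m)

end DetMDPAux

/-- Define `Q(s,a,β) = ∂/∂β log Z(s,a,β)` for a deterministic
MDP with finitely many (and, from nonterminal states, at least one) trajectories.
Then `Q` satisfies the expected-SARSA Bellman equation
`Q(s,a,β) = R(s,a) + Σ_{a'} π(a'|s+a) Q(s+a,a',β)` where
`π(a|s) = Z(s,a,β) / Σ_{a'} Z(s,a',β)`. -/
theorem stateAction_valueFunction_bellman {S A : Type} [Fintype A]
    (M : DetMDP S A)
    (hfin : ∀ (s : S) (a : A), (M.TrajSA s a).Finite)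
    (hne : ∀ (s : S) (a : A), ¬ M.terminal s → (M.TrajSA s a).Nonempty)
    (β μ : ℝ) (s : S) (a : A)
    (hs : ¬ M.terminal s) (hsa : ¬ M.terminal (M.step s a)) :
    deriv (fun b => Real.log (M.ZSA b μ s a)) β =
      M.reward s a + ∑ a' : A,
        (M.ZSA β μ (M.step s a) a' / ∑ a'' : A, M.ZSA β μ (M.step s a) a'') *
          deriv (fun b => Real.log (M.ZSA b μ (M.step s a) a')) β := by
  classical
  haveI : Nonempty A := ⟨a⟩
  set s' := M.step s a with hs'
  have hposSA : ∀ (b : ℝ) (a' : A), 0 < M.ZSA b μ s' a' :=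
    fun b a' => DetMDPAux.ZSA_pos M (hfin s' a') (hne s' a' hsa) b μ
  have hWb : ∀ b : ℝ, 0 < ∑ a' : A, M.ZSA b μ s' a' :=
    fun b => Finset.sum_pos (fun a' _ => hposSA b a') Finset.univ_nonempty
  set D : A → ℝ := fun a' =>
    ∑ l ∈ (hfin s' a').toFinset, M.pathReward s' l * M.wt β μ s' l with hD
  have hDer : ∀ a' : A, HasDerivAt (fun b => M.ZSA b μ s' a') (D a') β :=
    fun a' => DetMDPAux.hasDerivAt_ZSA M (hfin s' a') β μ
  have HW : HasDerivAt (fun b => ∑ a' : A, M.ZSA b μ s' a') (∑ a' : A, D a') β := by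
    have := HasDerivAt.fun_sum (u := (Finset.univ : Finset A))
      (fun a' _ => hDer a')
    simpa using this
  -- LHS
  have hfun : (fun b => Real.log (M.ZSA b μ s a)) =
      fun b => (b * M.reward s a + μ) + Real.log (∑ a' : A, M.ZSA b μ s' a') := by
    funext b
    rw [DetMDPAux.ZSA_rec M hfin hs hsa b μ, Real.log_mul (Real.exp_ne_zero _)
      (ne_of_gt (hWb b)), Real.log_exp]
  have h1 : HasDerivAt (fun b : ℝ => b * M.reward s a + μ) (M.reward s a) β := by
    simpa using ((hasDerivAt_id β).mul_const (M.reward s a)).add_const μ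
  have h2 := HW.log (ne_of_gt (hWb β))
  have hL : deriv (fun b => Real.log (M.ZSA b μ s a)) β =
      M.reward s a + (∑ a' : A, D a') / (∑ a' : A, M.ZSA β μ s' a') := by
    rw [hfun]; exact (h1.add h2).deriv
  rw [hL]
  congr 1
  have hterm : ∀ a' : A, deriv (fun b => Real.log (M.ZSA b μ s' a')) β =
      D a' / M.ZSA β μ s' a' :=
    fun a' => ((hDer a').log (ne_of_gt (hposSA β a'))).deriv
  rw [Finset.sum_div]
  apply Finset.sum_congr rfl
  intro a' _
  rw [hterm a', div_mul_div_comm, mul_comm (∑ a'' : A, M.ZSA β μ s' a''),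
    mul_div_mul_left _ _ (ne_of_gt (hposSA β a'))]
end

section
/- The geometric update rule Z(s_t,a_t,β) ← Z(s_t,a_t,β)^{1-α}·(e^{βr_t+μ}·Σ_{a'} Z(s_{t+1},a',β))^α, applied to positive Z-values, induces on Q(s,a) := ∂/∂β log Z(s,a,β) the expected-SARSA update Q(s_t,a_t) ← (1-α)Q(s_t,a_t) + α(r_t + Σ_{a'} π(a'|s_{t+1})Q(s_{t+1},a')), where π(a'|s) = Z(s,a',β)/Σ_{a''} Z(s,a'',β). -/
open Real

/-- The geometric update rule
`Z(s_t,a_t,β) ← Z(s_t,a_t,β)^{1-α} (e^{β r_t + μ} Σ_{a'} Z(s_{t+1},a',β))^α`,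
applied to positive `Z`-values, induces on `Q(s,a) = ∂/∂β log Z(s,a,β)` the
expected-SARSA update
`Q(s_t,a_t) ← (1-α) Q(s_t,a_t) + α (r_t + Σ_{a'} π(a'|s_{t+1}) Q(s_{t+1},a'))`
where `π(a'|s) = Z(s,a',β) / Σ_{a''} Z(s,a'',β)`. -/
theorem geometric_update_is_expected_sarsa {A : Type} [Fintype A] [Nonempty A]
    (Zold : ℝ → ℝ) (Znext : A → ℝ → ℝ) (r μ α : ℝ)
    (hα : α ∈ Set.Icc (0 : ℝ) 1)
    (hZold : ∀ b, 0 < Zold b) (hZnext : ∀ a b, 0 < Znext a b)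
    (hdiffo : Differentiable ℝ Zold) (hdiffn : ∀ a, Differentiable ℝ (Znext a))
    (β : ℝ) :
    deriv (fun b => Real.log
        (Zold b ^ (1 - α) * (Real.exp (b * r + μ) * ∑ a : A, Znext a b) ^ α)) β =
      (1 - α) * deriv (fun b => Real.log (Zold b)) β +
        α * (r + ∑ a : A, (Znext a β / ∑ a' : A, Znext a' β) *
          deriv (fun b => Real.log (Znext a b)) β) := by
  have hS : ∀ b, 0 < ∑ a : A, Znext a b := fun b =>
    Finset.sum_pos (fun a _ => hZnext a b) Finset.univ_nonempty
  -- rewrite the function inside the derivative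
  have hfun : (fun b => Real.log
        (Zold b ^ (1 - α) * (Real.exp (b * r + μ) * ∑ a : A, Znext a b) ^ α))
      = fun b => (1 - α) * Real.log (Zold b) +
          (α * (b * r + μ) + α * Real.log (∑ a : A, Znext a b)) := by
    funext b
    have h1 : (0:ℝ) < Real.exp (b * r + μ) * ∑ a : A, Znext a b :=
      mul_pos (Real.exp_pos _) (hS b)
    rw [Real.log_mul (Real.rpow_pos_of_pos (hZold b) _).ne' (Real.rpow_pos_of_pos h1 _).ne',
      Real.log_rpow (hZold b), Real.log_rpow h1,
      Real.log_mul (Real.exp_pos _).ne' (hS b).ne', Real.log_exp]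
    ring
  rw [hfun]
  -- derivatives of the pieces
  have hderS : HasDerivAt (fun b => ∑ a : A, Znext a b)
      (∑ a : A, deriv (Znext a) β) β :=
    HasDerivAt.fun_sum (fun a _ => ((hdiffn a) β).hasDerivAt)
  have hlogS : HasDerivAt (fun b => Real.log (∑ a : A, Znext a b))
      ((∑ a : A, deriv (Znext a) β) / ∑ a : A, Znext a β) β :=
    hderS.log (hS β).ne'
  have hlogZ : HasDerivAt (fun b => Real.log (Zold b))
      (deriv Zold β / Zold β) β := ((hdiffo β).hasDerivAt).log (hZold β).ne'
  have hlin : HasDerivAt (fun b : ℝ => α * (b * r + μ)) (α * r) β := by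
    have : HasDerivAt (fun b : ℝ => b * r + μ) r β := by
      simpa using ((hasDerivAt_id β).mul_const r).add_const μ
    simpa using this.const_mul α
  have htot : HasDerivAt (fun b => (1 - α) * Real.log (Zold b) +
      (α * (b * r + μ) + α * Real.log (∑ a : A, Znext a b)))
      ((1 - α) * (deriv Zold β / Zold β) +
        (α * r + α * ((∑ a : A, deriv (Znext a) β) / ∑ a : A, Znext a β))) β :=
    (hlogZ.const_mul (1 - α)).add (hlin.add (hlogS.const_mul α))
  rw [htot.deriv, hlogZ.deriv]
  have hlogsa : ∀ a : A, deriv (fun b => Real.log (Znext a b)) β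
      = deriv (Znext a) β / Znext a β := fun a =>
    (((hdiffn a) β).hasDerivAt.log (hZnext a β).ne').deriv
  have hsum : (∑ a : A, (Znext a β / ∑ a' : A, Znext a' β) *
      deriv (fun b => Real.log (Znext a b)) β)
      = (∑ a : A, deriv (Znext a) β) / ∑ a : A, Znext a β := by
    rw [Finset.sum_div]
    refine Finset.sum_congr rfl fun a _ => ?_
    rw [hlogsa a, div_mul_div_comm, mul_comm (∑ a' : A, Znext a' β) (Znext a β),
      mul_div_mul_left _ _ (hZnext a β).ne']
  rw [hsum]
  ring
end
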